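/- arXiv:1703.05685 — 2 statements merged into one kernel-verified Lean document; each statement's English description precedes it below -/
import Mathlib

section
/- Let G be a graph with a fixed linear ordering of its vertices and let Ĝ be constructed as follows: V(Ĝ) is the set of edges (u_i,u_j) of G with i<j, and (u_i,u_j), (u_k,u_l) with j≤l are adjacent in Ĝ iff i=k, or j=k, or (j=l and u_i,u_k non-adjacent in G). Then for every k ≥ 0, the number of independent sets of size k in Ĝ equals the number of clique covers of G with exactly n−k parts, where n = |V(G)|. -/
open Polynomial

/-- A clique cover of `G`: a partition of the vertex set into parts each inducing a clique. -/
def SimpleGraph.IsCliqueCover {V : Type*} [Fintype V] [DecidableEq V] (G : SimpleGraph V)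
    (P : Finpartition (Finset.univ : Finset V)) : Prop :=
  ∀ p ∈ P.parts, G.IsClique (p : Set V)

/-- `a_k(G)`: the number of clique covers of `G` with exactly `k` parts. -/
noncomputable def numCliqueCovers {V : Type*} [Fintype V] [DecidableEq V] (G : SimpleGraph V)
    (k : ℕ) : ℕ :=
  {P : Finpartition (Finset.univ : Finset V) | G.IsCliqueCover P ∧ P.parts.card = k}.ncard

/-- A finset of vertices is independent: pairwise non-adjacent. -/
def SimpleGraph.IsIndepFinset {W : Type*} (H : SimpleGraph W) (s : Finset W) : Prop :=
  ∀ v ∈ s, ∀ w ∈ s, ¬ H.Adj v w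

/-- `i_k(H)`: the number of independent sets of size `k` in `H`. -/
noncomputable def numIndepSets {W : Type*} (H : SimpleGraph W) (k : ℕ) : ℕ :=
  {s : Finset W | H.IsIndepFinset s ∧ s.card = k}.ncard

/-- The auxiliary one-sided relation in the construction of `Ĝ`:
for edges `e = (u_i,u_j)`, `f = (u_k,u_l)` with `j ≤ l`, they are related iff
`i = k`, or `j = k`, or (`j = l` and `u_i, u_k` non-adjacent). -/
def hatRel {n : ℕ} (G : SimpleGraph (Fin n)) (e f : Fin n × Fin n) : Prop :=
  e.2 ≤ f.2 ∧ (e.1 = f.1 ∨ e.2 = f.1 ∨ (e.2 = f.2 ∧ ¬ G.Adj e.1 f.1))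

/-- The graph `Ĝ` associated to `G` with its vertex ordering: vertices are the
edges `(u_i,u_j)` with `i < j`. -/
def hatGraph {n : ℕ} (G : SimpleGraph (Fin n)) :
    SimpleGraph {p : Fin n × Fin n // p.1 < p.2 ∧ G.Adj p.1 p.2} where
  Adj e f := e ≠ f ∧ (hatRel G e.1 f.1 ∨ hatRel G f.1 e.1)
  symm := ⟨fun e f h => ⟨h.1.symm, h.2.symm⟩⟩
  loopless := ⟨fun e h => h.1 rfl⟩

/-- The independence polynomial `I(H,x) = Σ_k (-1)^k i_k(H) x^k` (over `ℝ`). -/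
noncomputable def indepPoly {W : Type*} [Fintype W] (H : SimpleGraph W) : Polynomial ℝ :=
  ∑ k ∈ Finset.range (Fintype.card W + 1), C ((-1 : ℝ) ^ k * (numIndepSets H k : ℝ)) * X ^ k

/-- The adjoint polynomial `h(G,x) = Σ_k (-1)^{n-k} a_k(G) x^k` (over `ℝ`). -/
noncomputable def adjPoly {V : Type*} [Fintype V] [DecidableEq V] (G : SimpleGraph V) :
    Polynomial ℝ :=
  ∑ k ∈ Finset.range (Fintype.card V + 1),
    C ((-1 : ℝ) ^ (Fintype.card V - k) * (numCliqueCovers G k : ℝ)) * X ^ k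

/-- `h*(G,x) = x^n h(G,1/x) = Σ_k (-1)^k a_{n-k}(G) x^k` (over `ℝ`). -/
noncomputable def hStarPoly {V : Type*} [Fintype V] [DecidableEq V] (G : SimpleGraph V) :
    Polynomial ℝ :=
  ∑ k ∈ Finset.range (Fintype.card V + 1),
    C ((-1 : ℝ) ^ k * (numCliqueCovers G (Fintype.card V - k) : ℝ)) * X ^ k

/-- Integer version of the independence polynomial. -/
noncomputable def indepPolyZ {W : Type*} [Fintype W] (H : SimpleGraph W) : Polynomial ℤ :=
  ∑ k ∈ Finset.range (Fintype.card W + 1), C ((-1 : ℤ) ^ k * (numIndepSets H k : ℤ)) * X ^ k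

/-- Integer version of `h*`. -/
noncomputable def hStarPolyZ {V : Type*} [Fintype V] [DecidableEq V] (G : SimpleGraph V) :
    Polynomial ℤ :=
  ∑ k ∈ Finset.range (Fintype.card V + 1),
    C ((-1 : ℤ) ^ k * (numCliqueCovers G (Fintype.card V - k) : ℤ)) * X ^ k

/-- A finset of edges forming a matching in `G`. -/
def SimpleGraph.IsMatchingFinset {V : Type*} (G : SimpleGraph V) (s : Finset (Sym2 V)) : Prop :=
  (↑s : Set (Sym2 V)) ⊆ G.edgeSet ∧
    ∀ e ∈ s, ∀ f ∈ s, e ≠ f → ∀ v, ¬(v ∈ e ∧ v ∈ f)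

/-- `m_k(G)`: number of matchings of size `k`. -/
noncomputable def numMatchings {V : Type*} (G : SimpleGraph V) (k : ℕ) : ℕ :=
  {s : Finset (Sym2 V) | G.IsMatchingFinset s ∧ s.card = k}.ncard

/-- The matching polynomial `M(G,x) = Σ_k (-1)^k m_k(G) x^{n-k}` (over `ℝ`). -/
noncomputable def matchPoly {V : Type*} [Fintype V] (G : SimpleGraph V) : Polynomial ℝ :=
  ∑ k ∈ Finset.range (Fintype.card V + 1),
    C ((-1 : ℝ) ^ k * (numMatchings G k : ℝ)) * X ^ (Fintype.card V - k)

/-- The line graph `L(G)`: vertices are the edges of `G`, adjacent iff distinct and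
sharing an endpoint. -/
def lineGraph' {V : Type*} (G : SimpleGraph V) : SimpleGraph G.edgeSet where
  Adj e f := e ≠ f ∧ ∃ v, v ∈ (e : Sym2 V) ∧ v ∈ (f : Sym2 V)
  symm := ⟨fun e f h => ⟨h.1.symm, h.2.choose, h.2.choose_spec.2, h.2.choose_spec.1⟩⟩
  loopless := ⟨fun e h => h.1 rfl⟩

/-- `H ∪ K₁`: the disjoint union of `H` with one isolated vertex. -/
def addIsolated {V : Type*} (H : SimpleGraph V) : SimpleGraph (V ⊕ Unit) where
  Adj x y := ∃ a b, x = Sum.inl a ∧ y = Sum.inl b ∧ H.Adj a b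
  symm := ⟨by rintro x y ⟨a, b, rfl, rfl, h⟩; exact ⟨b, a, rfl, rfl, h.symm⟩⟩
  loopless := ⟨by rintro x ⟨a, b, rfl, h, hadj⟩; cases Sum.inl_injective h; exact hadj.ne rfl⟩

/-- `b` is the smallest zero of `p` in `(0,1]`. -/
def IsBetaZero (p : Polynomial ℝ) (b : ℝ) : Prop :=
  b ∈ Set.Ioc (0 : ℝ) 1 ∧ p.eval b = 0 ∧ ∀ y ∈ Set.Ioc (0 : ℝ) 1, p.eval y = 0 → b ≤ y

/-- `g` is the largest real zero of `p`. -/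
def IsGammaZero (p : Polynomial ℝ) (g : ℝ) : Prop :=
  p.eval g = 0 ∧ ∀ y : ℝ, p.eval y = 0 → y ≤ g


/-!
Both numbers count the maps `r` on the vertices with `v ≤ r v`, `r ∘ r = r` and cliques as
fibres. A clique cover gives the map sending each vertex to the largest vertex of its part, with
one fixed point per part. A set `S` of edges is independent in `Ĝ` iff no two edges of `S` share
their smaller end, no larger end is also a smaller end, and edges with a common larger end have
adjacent smaller ends; so `S` is the set of pairs `(v, r v)` with `r v ≠ v` for a unique such `r`,
and `|S| = n - #parts`.
-/

open Finset

namespace SimpleGraph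

variable {V : Type*} [LinearOrder V]

/-- `r` sends every vertex to the largest vertex of its part in a clique cover of `G`. -/
structure IsCliqueRetraction (G : SimpleGraph V) (r : V → V) : Prop where
  le_apply (v : V) : v ≤ r v
  apply_apply (v : V) : r (r v) = r v
  adj_of_apply_eq {v w : V} : v ≠ w → r v = r w → G.Adj v w

lemma IsCliqueRetraction.adj_apply {G : SimpleGraph V} {r : V → V} (hr : G.IsCliqueRetraction r)
    {v : V} (hv : r v ≠ v) : G.Adj v (r v) :=
  hr.adj_of_apply_eq hv.symm (hr.apply_apply v).symm

end SimpleGraph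

namespace Finpartition

variable {V : Type*} [Fintype V]

lemma eq_of_part_eq [DecidableEq V] {P Q : Finpartition (univ : Finset V)}
    (h : ∀ v, P.part v = Q.part v) : P = Q := by
  ext p
  constructor
  · intro hp
    obtain ⟨v, -, rfl⟩ := P.part_surjOn hp
    exact h v ▸ Q.part_mem.2 (mem_univ v)
  · intro hq
    obtain ⟨v, -, rfl⟩ := Q.part_surjOn hq
    exact h v ▸ P.part_mem.2 (mem_univ v)

def ofFibres [DecidableEq V] {W : Type*} [DecidableEq W] (f : V → W) :
    Finpartition (univ : Finset V) :=
  ofSetoid (Setoid.ker f)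

lemma mem_part_ofFibres [DecidableEq V] {W : Type*} [DecidableEq W] {f : V → W} {v w : V} :
    w ∈ (ofFibres f).part v ↔ f v = f w :=
  mem_part_ofSetoid_iff_rel

section LinearOrder

variable [LinearOrder V] {G : SimpleGraph V} {P : Finpartition (univ : Finset V)} {v w : V}

def partMax (P : Finpartition (univ : Finset V)) (v : V) : V :=
  (P.part v).max' (P.part_nonempty.2 (mem_univ v))

lemma partMax_mem_part : P.partMax v ∈ P.part v := max'_mem _ _

lemma le_partMax : v ≤ P.partMax v := le_max' _ _ (P.mem_part (mem_univ v))

lemma partMax_eq_partMax_iff : P.partMax v = P.partMax w ↔ P.part v = P.part w := by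
  refine ⟨fun h => P.eq_of_mem_parts (P.part_mem.2 (mem_univ v)) (P.part_mem.2 (mem_univ w))
    partMax_mem_part (h ▸ partMax_mem_part), fun h => ?_⟩
  simp only [partMax, h]

lemma part_partMax : P.part (P.partMax v) = P.part v :=
  P.part_eq_of_mem (P.part_mem.2 (mem_univ v)) partMax_mem_part

lemma isCliqueRetraction_partMax (hP : G.IsCliqueCover P) : G.IsCliqueRetraction P.partMax where
  le_apply _ := le_partMax
  apply_apply _ := partMax_eq_partMax_iff.2 part_partMax
  adj_of_apply_eq {v w} hne h := by
    have hw : w ∈ P.part v := by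
      rw [P.mem_part_iff_part_eq_part (mem_univ w) (mem_univ v), ← partMax_eq_partMax_iff, h]
    exact hP _ (P.part_mem.2 (mem_univ v)) (P.mem_part (mem_univ v)) hw hne

lemma ofFibres_partMax : ofFibres P.partMax = P :=
  eq_of_part_eq fun v => by
    ext w
    rw [mem_part_ofFibres, partMax_eq_partMax_iff,
      P.mem_part_iff_part_eq_part (mem_univ w) (mem_univ v), eq_comm]

variable {r : V → V}

lemma partMax_ofFibres (hle : ∀ v, v ≤ r v) (hidem : ∀ v, r (r v) = r v) :
    (ofFibres r).partMax = r := by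
  funext v
  apply le_antisymm
  · exact max'_le _ _ _ fun w hw => (hle w).trans_eq (mem_part_ofFibres.1 hw).symm
  · exact le_max' _ _ (mem_part_ofFibres.2 (hidem v).symm)

lemma card_parts_ofFibres (hidem : ∀ v, r (r v) = r v) :
    #(ofFibres r).parts = #{v | r v = v} := by
  symm
  apply card_bij (fun v _ => (ofFibres r).part v)
  · exact fun v _ => (ofFibres r).part_mem.2 (mem_univ v)
  · intro v hv w hw h
    have hw' : w ∈ (ofFibres r).part v := h ▸ (ofFibres r).mem_part (mem_univ w)
    rw [mem_part_ofFibres] at hw'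
    rw [(mem_filter.1 hv).2.symm, hw', (mem_filter.1 hw).2]
  · intro p hp
    obtain ⟨u, hu⟩ := nonempty_of_mem_parts _ hp
    refine ⟨r u, mem_filter.2 ⟨mem_univ _, hidem u⟩, ?_⟩
    rw [← part_eq_of_mem _ hp hu]
    exact part_eq_of_mem _ ((ofFibres r).part_mem.2 (mem_univ u)) (mem_part_ofFibres.2 (hidem u).symm)

lemma isCliqueCover_ofFibres (hr : G.IsCliqueRetraction r) : G.IsCliqueCover (ofFibres r) := by
  intro p hp v hv w hw hne
  obtain ⟨u, -, rfl⟩ := (ofFibres r).part_surjOn hp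
  exact hr.adj_of_apply_eq hne ((mem_part_ofFibres.1 hv).symm.trans (mem_part_ofFibres.1 hw))

end LinearOrder

end Finpartition

open Finpartition in
lemma numCliqueCovers_eq_ncard {V : Type*} [Fintype V] [LinearOrder V] (G : SimpleGraph V)
    (m : ℕ) : numCliqueCovers G m = {r | G.IsCliqueRetraction r ∧ #{v | r v = v} = m}.ncard := by
  have hinj : Set.InjOn ofFibres {r : V → V | G.IsCliqueRetraction r ∧ #{v | r v = v} = m} := by
    intro r hr r' hr' h
    rw [← partMax_ofFibres hr.1.le_apply hr.1.apply_apply, h,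
      partMax_ofFibres hr'.1.le_apply hr'.1.apply_apply]
  rw [numCliqueCovers, ← hinj.ncard_image]
  congr 1
  ext P
  constructor
  · rintro ⟨hP, rfl⟩
    refine ⟨P.partMax, ⟨isCliqueRetraction_partMax hP, ?_⟩, ofFibres_partMax⟩
    rw [← card_parts_ofFibres (isCliqueRetraction_partMax hP).apply_apply, ofFibres_partMax]
  · rintro ⟨r, ⟨hr, rfl⟩, rfl⟩
    exact ⟨isCliqueCover_ofFibres hr, card_parts_ofFibres hr.apply_apply⟩

section HatGraph

variable {n : ℕ} {G : SimpleGraph (Fin n)}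

abbrev HatVertex (G : SimpleGraph (Fin n)) := {p : Fin n × Fin n // p.1 < p.2 ∧ G.Adj p.1 p.2}

lemma isIndepFinset_hatGraph_iff {S : Finset (HatVertex G)} :
    (hatGraph G).IsIndepFinset S ↔
      (∀ e ∈ S, ∀ f ∈ S, e.1.1 = f.1.1 → e = f) ∧ (∀ e ∈ S, ∀ f ∈ S, e.1.2 ≠ f.1.1) ∧
        ∀ e ∈ S, ∀ f ∈ S, e ≠ f → e.1.2 = f.1.2 → G.Adj e.1.1 f.1.1 := by
  constructor
  · intro hS
    have hrel : ∀ e ∈ S, ∀ f ∈ S, e ≠ f → ¬ hatRel G e.1 f.1 :=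
      fun e he f hf hne hrel => hS e he f hf ⟨hne, Or.inl hrel⟩
    refine ⟨fun e he f hf h => ?_, fun e he f hf h => ?_, fun e he f hf hne h => ?_⟩
    · by_contra hne
      rcases le_total e.1.2 f.1.2 with hle | hle
      · exact hrel e he f hf hne ⟨hle, Or.inl h⟩
      · exact hrel f hf e he (Ne.symm hne) ⟨hle, Or.inl h.symm⟩
    · have hne : e ≠ f := by
        rintro rfl
        exact e.2.1.ne' h
      exact hrel e he f hf hne ⟨h ▸ f.2.1.le, Or.inr (Or.inl h)⟩
    · by_contra hadj
      exact hrel e he f hf hne ⟨h.le, Or.inr (Or.inr ⟨h, hadj⟩)⟩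
  · rintro ⟨hfst, hsnd, hadj⟩
    have hrel : ∀ e ∈ S, ∀ f ∈ S, e ≠ f → ¬ hatRel G e.1 f.1 := by
      rintro e he f hf hne ⟨-, h | h | ⟨h, hnadj⟩⟩
      · exact hne (hfst e he f hf h)
      · exact hsnd e he f hf h
      · exact hnadj (hadj e he f hf hne h)
    rintro e he f hf ⟨hne, h | h⟩
    · exact hrel e he f hf hne h
    · exact hrel f hf e he hne.symm h

variable {r r' : Fin n → Fin n} {v : Fin n}

open Classical in
noncomputable def retractionEdges (G : SimpleGraph (Fin n)) (r : Fin n → Fin n) : Finset (HatVertex G) :=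
  {e | e.1.2 = r e.1.1}

@[simp]
lemma mem_retractionEdges {e : HatVertex G} : e ∈ retractionEdges G r ↔ e.1.2 = r e.1.1 := by
  simp [retractionEdges]

lemma exists_mem_retractionEdges (hr : G.IsCliqueRetraction r) (hv : r v ≠ v) :
    ∃ e ∈ retractionEdges G r, e.1 = (v, r v) :=
  ⟨⟨(v, r v), (hr.le_apply v).lt_of_ne hv.symm, hr.adj_apply hv⟩, mem_retractionEdges.2 rfl, rfl⟩

lemma isIndepFinset_retractionEdges (hr : G.IsCliqueRetraction r) :
    (hatGraph G).IsIndepFinset (retractionEdges G r) := by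
  simp only [isIndepFinset_hatGraph_iff, mem_retractionEdges]
  refine ⟨fun e he f hf h => ?_, fun e he f hf h => ?_, fun e he f hf hne h => ?_⟩
  · exact Subtype.ext (Prod.ext h (by rw [he, hf, h]))
  · have hlt := f.2.1
    rw [hf, ← h, he, hr.apply_apply] at hlt
    exact lt_irrefl _ hlt
  · exact hr.adj_of_apply_eq (fun h' => hne (Subtype.ext (Prod.ext h' h))) (by rw [← he, ← hf, h])

lemma card_retractionEdges (hr : G.IsCliqueRetraction r) :
    #(retractionEdges G r) = n - #{v | r v = v} := by
  have hfst : (retractionEdges G r).image (fun e => e.1.1) = univ.filter (fun v => ¬ r v = v) := by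
    ext v
    simp only [mem_image, mem_retractionEdges, mem_filter, mem_univ, true_and]
    constructor
    · rintro ⟨e, he, rfl⟩
      exact he ▸ e.2.1.ne'
    · intro hv
      obtain ⟨e, he, hev⟩ := exists_mem_retractionEdges hr hv
      exact ⟨e, mem_retractionEdges.1 he, congrArg Prod.fst hev⟩
  have hinj : Set.InjOn (fun e : HatVertex G => e.1.1) (retractionEdges G r) := by
    intro e he f hf h
    rw [mem_coe, mem_retractionEdges] at he hf
    exact Subtype.ext (Prod.ext h (by rw [he, hf]; exact congrArg r h))
  have hsplit := card_filter_add_card_filter_not (s := univ) (fun v => r v = v)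
  rw [card_univ, Fintype.card_fin] at hsplit
  rw [← card_image_of_injOn hinj, hfst]
  omega

lemma apply_eq_of_retractionEdges_eq (hr : G.IsCliqueRetraction r)
    (h : retractionEdges G r = retractionEdges G r') (hv : r v ≠ v) : r' v = r v := by
  obtain ⟨e, he, hev⟩ := exists_mem_retractionEdges hr hv
  rw [h, mem_retractionEdges, hev] at he
  exact he.symm

lemma retractionEdges_injOn : Set.InjOn (retractionEdges G) {r | G.IsCliqueRetraction r} := by
  intro r hr r' hr' h
  funext v
  by_cases hv : r v = v
  · by_cases hv' : r' v = v
    · rw [hv, hv']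
    · exact apply_eq_of_retractionEdges_eq hr' h.symm hv'
  · exact (apply_eq_of_retractionEdges_eq hr h hv).symm

variable {S : Finset (HatVertex G)}

noncomputable def hatRetraction (S : Finset (HatVertex G)) (v : Fin n) : Fin n :=
  if h : ∃ e ∈ S, e.1.1 = v then h.choose.1.2 else v

lemma hatRetraction_fst (hS : (hatGraph G).IsIndepFinset S) {e : HatVertex G} (he : e ∈ S) :
    hatRetraction S e.1.1 = e.1.2 := by
  have h : ∃ f ∈ S, f.1.1 = e.1.1 := ⟨e, he, rfl⟩
  obtain ⟨hf, hfe⟩ := h.choose_spec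
  rw [hatRetraction, dif_pos h, (isIndepFinset_hatGraph_iff.1 hS).1 _ hf e he hfe]

lemma hatRetraction_cases (hS : (hatGraph G).IsIndepFinset S) (v : Fin n) :
    (∃ e ∈ S, e.1.1 = v ∧ hatRetraction S v = e.1.2) ∨
      (∀ e ∈ S, e.1.1 ≠ v) ∧ hatRetraction S v = v := by
  by_cases h : ∃ e ∈ S, e.1.1 = v
  · obtain ⟨e, he, rfl⟩ := h
    exact Or.inl ⟨e, he, rfl, hatRetraction_fst hS he⟩
  · exact Or.inr ⟨fun e he hev => h ⟨e, he, hev⟩, dif_neg h⟩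

lemma isCliqueRetraction_hatRetraction (hS : (hatGraph G).IsIndepFinset S) :
    G.IsCliqueRetraction (hatRetraction S) := by
  obtain ⟨hfst, hsnd, hadj⟩ := isIndepFinset_hatGraph_iff.1 hS
  refine ⟨fun v => ?_, fun v => ?_, fun {v w} hne h => ?_⟩
  · rcases hatRetraction_cases hS v with ⟨e, -, rfl, hv⟩ | ⟨-, hv⟩
    · exact hv ▸ e.2.1.le
    · exact hv.ge
  · rcases hatRetraction_cases hS v with ⟨e, he, rfl, hv⟩ | ⟨-, hv⟩
    · rw [hv]
      rcases hatRetraction_cases hS e.1.2 with ⟨f, hf, hfe, -⟩ | ⟨-, he2⟩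
      · exact absurd hfe.symm (hsnd e he f hf)
      · exact he2
    · rw [hv, hv]
  · rcases hatRetraction_cases hS v with ⟨e, he, rfl, hv⟩ | ⟨-, hv⟩ <;>
      rcases hatRetraction_cases hS w with ⟨f, hf, rfl, hw⟩ | ⟨-, hw⟩ <;>
      rw [hv, hw] at h
    · exact hadj e he f hf (fun hef => hne (hef ▸ rfl)) h
    · exact h ▸ e.2.2
    · exact h ▸ f.2.2.symm
    · exact absurd h hne

lemma retractionEdges_hatRetraction (hS : (hatGraph G).IsIndepFinset S) :
    retractionEdges G (hatRetraction S) = S := by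
  ext e
  rw [mem_retractionEdges]
  refine ⟨fun h => ?_, fun he => (hatRetraction_fst hS he).symm⟩
  rcases hatRetraction_cases hS e.1.1 with ⟨f, hf, hfe, hv⟩ | ⟨-, hv⟩
  · have hef : f = e := Subtype.ext (Prod.ext hfe (by rw [h, hv]))
    exact hef ▸ hf
  · exact absurd (h.trans hv) e.2.1.ne'

lemma numIndepSets_hatGraph_eq_ncard (k : ℕ) :
    numIndepSets (hatGraph G) k = {r | G.IsCliqueRetraction r ∧ n - #{v | r v = v} = k}.ncard := by
  rw [numIndepSets, ← (retractionEdges_injOn.mono fun r hr => hr.1).ncard_image]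
  congr 1
  ext S
  constructor
  · rintro ⟨hS, rfl⟩
    refine ⟨hatRetraction S, ⟨isCliqueRetraction_hatRetraction hS, ?_⟩,
      retractionEdges_hatRetraction hS⟩
    rw [← card_retractionEdges (isCliqueRetraction_hatRetraction hS),
      retractionEdges_hatRetraction hS]
  · rintro ⟨r, ⟨hr, rfl⟩, rfl⟩
    exact ⟨isIndepFinset_retractionEdges hr, card_retractionEdges hr⟩

end HatGraph

/-- for every `k ≥ 0`, the number of independent sets of size `k` in `Ĝ`
equals the number of clique covers of `G` with exactly `n - k` parts (interpreted as `0`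
when `k > n`). -/
theorem stmt3 {n : ℕ} (G : SimpleGraph (Fin n)) (k : ℕ) :
    numIndepSets (hatGraph G) k = if k ≤ n then numCliqueCovers G (n - k) else 0 := by
  rw [numIndepSets_hatGraph_eq_ncard]
  have hfix (r : Fin n → Fin n) : #{v | r v = v} ≤ n := (card_le_univ _).trans_eq (Fintype.card_fin n)
  split_ifs with hk
  · rw [numCliqueCovers_eq_ncard]
    congr 1
    ext r
    exact and_congr_right fun _ => by have := hfix r; omega
  · convert Set.ncard_empty (Fin n → Fin n)
    exact Set.eq_empty_of_forall_notMem fun r hr => by have := hfix r; have := hr.2; omega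
end

section
/- Let G be a connected graph with at least one edge. Then γ(G) ≤ t(G), where γ(G) is the largest real zero of the adjoint polynomial of G and t(G) is the largest real zero of the matching polynomial of G. -/
open Polynomial

/-!
Both polynomials are reversed independence polynomials of graphs on the edges of `G`. Write
`I(H, y) = ∑ (-y)^|S|` over the independent sets `S` of `H` and `n = |V|`. Matchings are the
independent sets of the line graph `L`, so `M(G, x) = x^n I(L, 1/x)`. Ordering `V`, a clique cover
with `n - k` parts is encoded by the `k` edges joining each non-maximal vertex to the largest
vertex of its part; these are the independent `k`-sets of a spanning subgraph `Ĝ ≤ L`, so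
`h(G, x) = x^n I(Ĝ, 1/x)`.

It remains to compare `I(Ĝ, ·)` with `I(L, ·)` below the first root `b ∈ (0, 1]` of `I(L, ·)`.
The recurrence `I(H[A + v]) = I(H[A]) - y I(H[A - N(v)])` shows that positivity on `[0, b)` passes
to all induced subgraphs, and `I(H - uv) = I(H) + y² I(H - N[u] - N[v])` then shows that deleting
edges keeps it. Hence `I(Ĝ, ·) > 0` on `[0, b)`, so `h` has no root above `1/b ≤ t`.
-/

open Finset

lemma Continuous.exists_first_zero {f : ℝ → ℝ} (hf : Continuous f) (h0 : 0 < f 0) {y : ℝ}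
    (hy : 0 ≤ y) (hfy : f y ≤ 0) :
    ∃ b ∈ Set.Ioc 0 y, f b = 0 ∧ ∀ z ∈ Set.Ico 0 b, 0 < f z := by
  have hzero : ∀ z, 0 ≤ z → f z ≤ 0 → ∃ w ∈ Set.Icc 0 z, f w = 0 := fun z hz hfz =>
    intermediate_value_Icc' hz hf.continuousOn ⟨hfz, h0.le⟩
  have hS : IsCompact (Set.Icc 0 y ∩ f ⁻¹' {0}) :=
    isCompact_Icc.inter_right (isClosed_singleton.preimage hf)
  obtain ⟨b, ⟨hb, hfb⟩, hmin⟩ := hS.exists_isLeast (hzero y hy hfy)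
  have hb0 : b ≠ 0 := by rintro rfl; simp_all
  refine ⟨b, ⟨lt_of_le_of_ne hb.1 (Ne.symm hb0), hb.2⟩, hfb, fun z hz => ?_⟩
  by_contra! hfz
  obtain ⟨w, hw, hfw⟩ := hzero z hz.1 hfz
  have hbw := hmin ⟨⟨hw.1, hw.2.trans (hz.2.le.trans hb.2)⟩, hfw⟩
  linarith [hw.2, hz.2]

lemma Continuous.nonneg_of_pos_on_Ico {f : ℝ → ℝ} (hf : Continuous f) {a c : ℝ}
    (hac : a < c) (hpos : ∀ z ∈ Set.Ico a c, 0 < f z) : 0 ≤ f c :=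
  closure_minimal (fun z hz => (hpos z hz).le) (isClosed_le continuous_const hf)
    (closure_Ico hac.ne ▸ Set.right_mem_Icc.2 hac.le)

lemma Finpartition.part_eq_part_of_mem_part {α : Type*} [Fintype α] [DecidableEq α]
    {P : Finpartition (univ : Finset α)} {x y : α} (h : y ∈ P.part x) : P.part y = P.part x :=
  (P.mem_part_iff_part_eq_part (mem_univ y) (mem_univ x)).1 h

namespace SimpleGraph

section IndepSum

variable {W : Type*} {H H' : SimpleGraph W}

lemma isIndepFinset_empty : H.IsIndepFinset ∅ := by simp [IsIndepFinset]

lemma isIndepFinset_insert [DecidableEq W] {s : Finset W} {v : W} :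
    H.IsIndepFinset (insert v s) ↔ H.IsIndepFinset s ∧ ∀ w ∈ s, ¬ H.Adj v w := by
  unfold IsIndepFinset
  simp only [Finset.mem_insert, forall_eq_or_imp, H.irrefl, not_false_eq_true, true_and]
  exact ⟨fun h => ⟨fun a ha => (h.2 a ha).2, h.1⟩,
    fun h => ⟨h.2, fun a ha => ⟨fun hav => h.2 a ha hav.symm, h.1 a ha⟩⟩⟩

lemma IsIndepFinset.anti {s : Finset W} (hle : H ≤ H') (hs : H'.IsIndepFinset s) :
    H.IsIndepFinset s :=
  fun v hv w hw h => hs v hv w hw (hle h)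

-- `I(H[A], y)` in the notation above.
open Classical in
noncomputable def indepSum (H : SimpleGraph W) (A : Finset W) (y : ℝ) : ℝ :=
  ∑ s ∈ A.powerset with H.IsIndepFinset s, (-y) ^ #s

lemma indepSum_empty (y : ℝ) : H.indepSum ∅ y = 1 := by
  simp [indepSum, filter_singleton, isIndepFinset_empty]

lemma indepSum_zero (A : Finset W) : H.indepSum A 0 = 1 := by
  classical
  rw [indepSum, sum_eq_single ∅ (fun s _ hs => by simp [hs])
    (fun h => (h (mem_filter.2 ⟨empty_mem_powerset A, isIndepFinset_empty⟩)).elim)]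
  simp

lemma continuous_indepSum (A : Finset W) : Continuous (H.indepSum A) := by
  unfold indepSum
  fun_prop

lemma indepSum_insert [DecidableEq W] [DecidableRel H.Adj] {A : Finset W} {v : W} (hv : v ∉ A)
    (y : ℝ) :
    H.indepSum (insert v A) y = H.indepSum A y - y * H.indepSum {a ∈ A | ¬ H.Adj v a} y := by
  simp only [indepSum, sum_filter, sum_powerset_insert hv, mul_sum]
  rw [sub_eq_add_neg, ← sum_neg_distrib]
  congr 1
  have hD : {a ∈ A | ¬ H.Adj v a}.powerset ⊆ A.powerset := powerset_mono.2 (filter_subset _ _)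
  rw [← sum_subset hD fun x hxA hxD => ?_]
  · refine sum_congr rfl fun x hx => ?_
    have hxv : v ∉ x := fun h => hv (mem_powerset.1 (hD hx) h)
    have hadj : ∀ w ∈ x, ¬ H.Adj v w := fun w hw => (mem_filter.1 (mem_powerset.1 hx hw)).2
    split_ifs with hvx hx' hx'
    · rw [card_insert_of_notMem hxv, pow_succ]
      ring
    · exact absurd (isIndepFinset_insert.1 hvx).1 hx'
    · exact absurd (isIndepFinset_insert.2 ⟨hx', hadj⟩) hvx
    · simp
  · obtain ⟨w, hwx, hvw⟩ : ∃ w ∈ x, H.Adj v w := by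
      by_contra! h
      exact hxD (mem_powerset.2 fun w hw => mem_filter.2 ⟨mem_powerset.1 hxA hw, h w hw⟩)
    rw [if_neg fun h => (isIndepFinset_insert.1 h).2 w hwx hvw]

lemma indepSum_congr {A : Finset W} (h : ∀ a ∈ A, ∀ b ∈ A, H.Adj a b ↔ H'.Adj a b) :
    H.indepSum A = H'.indepSum A := by
  classical
  ext y
  refine sum_congr (filter_congr fun s hs => ?_) fun _ _ => rfl
  have hs := mem_powerset.1 hs
  exact forall₂_congr fun a ha => forall₂_congr fun b hb => not_congr (h a (hs ha) b (hs hb))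

lemma indepSum_deleteEdges_of_notMem {A : Finset W} {u : W} (hu : u ∉ A) (v : W) :
    (H.deleteEdges {s(u, v)}).indepSum A = H.indepSum A := by
  refine indepSum_congr fun a ha b hb => ?_
  rw [deleteEdges_adj, Set.mem_singleton_iff, Sym2.eq_iff, and_iff_left]
  rintro (⟨rfl, -⟩ | ⟨-, rfl⟩) <;> contradiction

-- Expand both sides at `u`: the two expansions differ only in whether `v` may join `u`'s
-- non-neighbours, and expanding that difference at `v` gives the correction term.
lemma indepSum_deleteEdges [DecidableEq W] [DecidableRel H.Adj] {B : Finset W} {u v : W}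
    (huv : H.Adj u v) (hu : u ∉ B) (hv : v ∉ B) (y : ℝ) :
    (H.deleteEdges {s(u, v)}).indepSum (insert u (insert v B)) y =
      H.indepSum (insert u (insert v B)) y +
        y ^ 2 * H.indepSum {a ∈ B | ¬ H.Adj u a ∧ ¬ H.Adj v a} y := by
  set D := {a ∈ B | ¬ H.Adj u a}
  have hu' : u ∉ insert v B := by simp [huv.ne, hu]
  have hvD : v ∉ D := fun h => hv (mem_filter.1 h).1
  have hfilter' : {a ∈ insert v B | ¬ (H.deleteEdges {s(u, v)}).Adj u a} = insert v D := by
    ext a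
    by_cases hav : a = v
    · simp [hav, D]
    · simp [hav, D, huv.ne]
  have hfilter : {a ∈ insert v B | ¬ H.Adj u a} = D := by
    rw [filter_insert, if_neg (not_not.2 huv)]
  have hDv : {a ∈ D | ¬ H.Adj v a} = {a ∈ B | ¬ H.Adj u a ∧ ¬ H.Adj v a} := by
    rw [filter_filter]
  rw [indepSum_insert hu', indepSum_insert hu', hfilter', hfilter,
    indepSum_deleteEdges_of_notMem hu', indepSum_deleteEdges_of_notMem (fun h => hu' ?_),
    indepSum_insert hvD, hDv]
  · ring
  · exact mem_insert.2 ((mem_insert.1 h).imp_right fun h => (mem_filter.1 h).1)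

theorem indepSum_pos_of_subset {c : ℝ} {A B : Finset W} (hBA : B ⊆ A)
    (hA : ∀ y ∈ Set.Ico 0 c, 0 < H.indepSum A y) :
    ∀ y ∈ Set.Ico 0 c, 0 < H.indepSum B y := by
  classical
  induction A using Finset.strongInduction generalizing B c with
  | H A ih =>
  obtain rfl | hBA := hBA.eq_or_ssubset
  · exact hA
  obtain ⟨v, hvA, hvB⟩ := exists_of_ssubset hBA
  -- At the first zero `b` of `I(A - v)` the recurrence at `v` would make `I(A)(b) ≤ 0`.
  have hAv : ∀ y ∈ Set.Ico 0 c, 0 < H.indepSum (A.erase v) y := by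
    intro y hy
    by_contra! hneg
    obtain ⟨b, hb, hroot, hbpos⟩ :=
      (H.continuous_indepSum _).exists_first_zero (by simp [indepSum_zero]) hy.1 hneg
    have hN : 0 ≤ H.indepSum {a ∈ A.erase v | ¬ H.Adj v a} b :=
      (H.continuous_indepSum _).nonneg_of_pos_on_Ico hb.1
        (ih _ (erase_ssubset hvA) (filter_subset _ _) hbpos)
    have hAb := hA b ⟨hb.1.le, hb.2.trans_lt hy.2⟩
    rw [← insert_erase hvA, indepSum_insert (notMem_erase v A), hroot] at hAb
    nlinarith [hb.1]
  exact ih _ (erase_ssubset hvA) (subset_erase.2 ⟨hBA.subset, hvB⟩) hAv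

lemma exists_first_root_of_nonpos {A : Finset W} {y : ℝ} (hy : y ∈ Set.Icc 0 1)
    (hAy : H.indepSum A y ≤ 0) :
    ∃ b ∈ Set.Ioc 0 1, H.indepSum A b = 0 ∧ ∀ z ∈ Set.Ico 0 b, 0 < H.indepSum A z := by
  obtain ⟨b, hb, h⟩ :=
    (H.continuous_indepSum A).exists_first_zero (by simp [indepSum_zero]) hy.1 hAy
  exact ⟨b, ⟨hb.1, hb.2.trans hy.2⟩, h⟩

theorem exists_first_root_indepSum {A : Finset W} (hA : A.Nonempty) :
    ∃ b ∈ Set.Ioc 0 1, H.indepSum A b = 0 ∧ ∀ y ∈ Set.Ico 0 b, 0 < H.indepSum A y := by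
  classical
  induction hA using Finset.Nonempty.cons_induction with
  | singleton v =>
    refine exists_first_root_of_nonpos ⟨zero_le_one, le_rfl⟩ (le_of_eq ?_)
    rw [← insert_empty, indepSum_insert (notMem_empty v), filter_empty, indepSum_empty]
    ring
  | cons v A hv hA ih =>
    obtain ⟨b, hb, hroot, hpos⟩ := ih
    have hN : 0 ≤ H.indepSum {a ∈ A | ¬ H.Adj v a} b :=
      (H.continuous_indepSum _).nonneg_of_pos_on_Ico hb.1
        (indepSum_pos_of_subset (filter_subset _ _) hpos)
    refine exists_first_root_of_nonpos ⟨hb.1.le, hb.2⟩ ?_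
    rw [cons_eq_insert, indepSum_insert hv, hroot]
    nlinarith [hb.1]

lemma indepSum_le_indepSum_deleteEdges {c : ℝ}
    (hpos : ∀ A, ∀ y ∈ Set.Ico 0 c, 0 < H.indepSum A y) (e : Sym2 W) (A : Finset W) {y : ℝ}
    (hy : y ∈ Set.Ico 0 c) : H.indepSum A y ≤ (H.deleteEdges {e}).indepSum A y := by
  classical
  induction e using Sym2.ind with | h u v =>
  by_cases huv : H.Adj u v
  swap
  · rw [deleteEdges_eq_self.2 (Set.disjoint_singleton_right.2 huv)]
  by_cases hu : u ∈ A
  swap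
  · rw [indepSum_deleteEdges_of_notMem hu]
  by_cases hv : v ∈ A
  swap
  · rw [Sym2.eq_swap, indepSum_deleteEdges_of_notMem hv]
  set B := (A.erase u).erase v
  have hA : insert u (insert v B) = A := by
    rw [insert_erase (mem_erase.2 ⟨huv.ne.symm, hv⟩), insert_erase hu]
  rw [← hA, indepSum_deleteEdges huv (by simp [B]) (by simp [B])]
  exact le_add_of_nonneg_right (mul_nonneg (sq_nonneg y) (hpos _ y hy).le)

theorem indepSum_pos_of_le [Finite W] (hle : H ≤ H') {c : ℝ}
    (hpos : ∀ A, ∀ y ∈ Set.Ico 0 c, 0 < H'.indepSum A y) :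
    ∀ A, ∀ y ∈ Set.Ico 0 c, 0 < H.indepSum A y := by
  rw [← deleteEdges_sdiff_eq_of_le hle]
  induction H'.edgeSet \ H.edgeSet, Set.toFinite (H'.edgeSet \ H.edgeSet)
    using Set.Finite.induction_on with
  | empty => rwa [deleteEdges_empty]
  | @insert e s _ _ ih =>
    intro A y hy
    rw [Set.insert_eq, Set.union_comm, ← deleteEdges_deleteEdges]
    exact (ih A y hy).trans_le (indepSum_le_indepSum_deleteEdges ih e A hy)

variable [Fintype W]

lemma indepSum_univ_eq_sum_numIndepSets {n : ℕ} (hn : ∀ s, H.IsIndepFinset s → #s ≤ n)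
    (y : ℝ) :
    H.indepSum univ y = ∑ k ∈ range (n + 1), (-1) ^ k * (numIndepSets H k : ℝ) * y ^ k := by
  classical
  rw [indepSum, ← sum_fiberwise_of_maps_to (g := card) (t := range (n + 1))
    fun s hs => mem_range.2 (Nat.lt_succ_of_le (hn s (mem_filter.1 hs).2))]
  refine sum_congr rfl fun k _ => ?_
  have hcount : #{s ∈ univ.powerset | H.IsIndepFinset s ∧ #s = k} = numIndepSets H k := by
    rw [numIndepSets, ← Set.ncard_coe_finset]
    congr 1
    ext s
    simp
  rw [filter_filter, sum_congr rfl fun s hs => by rw [(mem_filter.1 hs).2.2], sum_const, hcount,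
    nsmul_eq_mul, neg_pow]
  ring

lemma sum_numIndepSets_mul_pow_sub {n : ℕ} (hn : ∀ s, H.IsIndepFinset s → #s ≤ n) {x : ℝ}
    (hx : x ≠ 0) :
    ∑ k ∈ range (n + 1), (-1) ^ k * (numIndepSets H k : ℝ) * x ^ (n - k) =
      x ^ n * H.indepSum univ x⁻¹ := by
  rw [indepSum_univ_eq_sum_numIndepSets hn, mul_sum]
  refine sum_congr rfl fun k hk => ?_
  rw [pow_sub₀ x hx (Nat.le_of_lt_succ (mem_range.1 hk)), inv_pow]
  ring

theorem isGammaZero_le_of_le [Nonempty W] (hle : H ≤ H') {n : ℕ} {p q : ℝ[X]}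
    (hp : ∀ x, 0 < x → p.eval x = x ^ n * H.indepSum univ x⁻¹)
    (hq : ∀ x, 0 < x → q.eval x = x ^ n * H'.indepSum univ x⁻¹) {g t : ℝ}
    (hg : IsGammaZero p g) (ht : IsGammaZero q t) : g ≤ t := by
  obtain ⟨b, hb, hroot, hpos⟩ := H'.exists_first_root_indepSum univ_nonempty
  have hbt : b⁻¹ ≤ t := ht.2 _ (by rw [hq _ (inv_pos.2 hb.1), inv_inv, hroot, mul_zero])
  by_contra! htg
  have hg0 : 0 < g := by
    have : 1 ≤ b⁻¹ := (one_le_inv₀ hb.1).2 hb.2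
    linarith
  have hgb : g⁻¹ < b := (inv_lt_comm₀ hg0 hb.1).2 (hbt.trans_lt htg)
  have hHg : 0 < H.indepSum univ g⁻¹ :=
    indepSum_pos_of_le hle (fun A => indepSum_pos_of_subset (subset_univ A) hpos) univ g⁻¹
      ⟨inv_nonneg.2 hg0.le, hgb⟩
  have hpg := hg.1
  rw [hp g hg0] at hpg
  exact (mul_pos (pow_pos hg0 n) hHg).ne' hpg

end IndepSum

section SortedEdges

variable {V : Type*} [LinearOrder V] {G : SimpleGraph V}

variable (G) in
def SortedEdge : Type _ := {p : V × V // p.1 < p.2 ∧ G.Adj p.1 p.2}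

namespace SortedEdge

def lo (e : G.SortedEdge) : V := e.1.1

def hi (e : G.SortedEdge) : V := e.1.2

lemma lo_lt_hi (e : G.SortedEdge) : e.lo < e.hi := e.2.1

lemma adj (e : G.SortedEdge) : G.Adj e.lo e.hi := e.2.2

def mk {a b : V} (hab : a < b) (h : G.Adj a b) : G.SortedEdge := ⟨(a, b), hab, h⟩

@[ext] lemma ext {e f : G.SortedEdge} (hlo : e.lo = f.lo) (hhi : e.hi = f.hi) : e = f :=
  Subtype.ext (Prod.ext hlo hhi)

instance [Finite V] : Finite G.SortedEdge := Subtype.finite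

noncomputable instance [Fintype V] : Fintype G.SortedEdge := Fintype.ofFinite _

def toSym2 (e : G.SortedEdge) : Sym2 V := s(e.lo, e.hi)

lemma toSym2_injective : Function.Injective (toSym2 (G := G)) := by
  intro e f h
  rcases Sym2.eq_iff.1 h with ⟨h1, h2⟩ | ⟨h1, h2⟩
  · exact ext h1 h2
  · exact absurd (h1 ▸ h2 ▸ e.lo_lt_hi) (f.lo_lt_hi).asymm

lemma toSym2_mem_edgeSet (e : G.SortedEdge) : e.toSym2 ∈ G.edgeSet := e.adj

lemma exists_toSym2_eq {x : Sym2 V} (hx : x ∈ G.edgeSet) :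
    ∃ e : G.SortedEdge, e.toSym2 = x := by
  induction x using Sym2.ind with | h a b =>
  rcases lt_trichotomy a b with hab | rfl | hab
  · exact ⟨mk hab hx, rfl⟩
  · exact absurd hx (G.loopless.irrefl a)
  · exact ⟨mk hab (G.adj_symm hx), Sym2.eq_swap⟩

end SortedEdge

open SortedEdge

variable (G) in
def sortedLineGraph : SimpleGraph G.SortedEdge where
  Adj e f := e ≠ f ∧ ∃ v, v ∈ e.toSym2 ∧ v ∈ f.toSym2
  symm := ⟨fun _ _ h => ⟨h.1.symm, h.2.imp fun _ hv => hv.symm⟩⟩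
  loopless := ⟨fun _ h => h.1 rfl⟩

variable (G) in
/-- `hatGraph` for an arbitrary linearly ordered vertex type. -/
def sortedHatGraph : SimpleGraph G.SortedEdge :=
  fromRel fun e f =>
    e.hi ≤ f.hi ∧ (e.lo = f.lo ∨ e.hi = f.lo ∨ (e.hi = f.hi ∧ ¬ G.Adj e.lo f.lo))

lemma sortedHatGraph_le_sortedLineGraph : sortedHatGraph G ≤ sortedLineGraph G := by
  have key : ∀ e f : G.SortedEdge,
      (e.lo = f.lo ∨ e.hi = f.lo ∨ (e.hi = f.hi ∧ ¬ G.Adj e.lo f.lo)) →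
        ∃ v, v ∈ e.toSym2 ∧ v ∈ f.toSym2 := by
    rintro e f (h | h | ⟨h, -⟩)
    · exact ⟨e.lo, Sym2.mem_mk_left _ _, h ▸ Sym2.mem_mk_left _ _⟩
    · exact ⟨e.hi, Sym2.mem_mk_right _ _, h ▸ Sym2.mem_mk_left _ _⟩
    · exact ⟨e.hi, Sym2.mem_mk_right _ _, h ▸ Sym2.mem_mk_right _ _⟩
  rintro e f ⟨hne, ⟨-, h⟩ | ⟨-, h⟩⟩
  · exact ⟨hne, key e f h⟩
  · obtain ⟨v, hf, he⟩ := key f e h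
    exact ⟨hne, v, he, hf⟩

lemma isIndepFinset_sortedHatGraph_iff {S : Finset G.SortedEdge} :
    (sortedHatGraph G).IsIndepFinset S ↔
      (∀ e ∈ S, ∀ f ∈ S, e.lo = f.lo → e = f) ∧
        (∀ e ∈ S, ∀ f ∈ S, e.hi ≠ f.lo) ∧
        ∀ e ∈ S, ∀ f ∈ S, e ≠ f → e.hi = f.hi → G.Adj e.lo f.lo := by
  constructor
  · intro hS
    refine ⟨fun e he f hf h => ?_, fun e he f hf h => ?_, fun e he f hf hne h => ?_⟩
    · by_contra hne
      rcases le_total e.hi f.hi with hle | hle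
      · exact hS e he f hf ⟨hne, Or.inl ⟨hle, Or.inl h⟩⟩
      · exact hS e he f hf ⟨hne, Or.inr ⟨hle, Or.inl h.symm⟩⟩
    · have hne : e ≠ f := by rintro rfl; exact e.lo_lt_hi.ne' h
      exact hS e he f hf ⟨hne, Or.inl ⟨h ▸ f.lo_lt_hi.le, Or.inr (Or.inl h)⟩⟩
    · by_contra hadj
      exact hS e he f hf ⟨hne, Or.inl ⟨h.le, Or.inr (Or.inr ⟨h, hadj⟩)⟩⟩
  · rintro ⟨hlo, hhilo, hhi⟩ e he f hf ⟨hne, hR⟩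
    have key : ∀ e ∈ S, ∀ f ∈ S, e ≠ f →
        ¬ (e.lo = f.lo ∨ e.hi = f.lo ∨ (e.hi = f.hi ∧ ¬ G.Adj e.lo f.lo)) := by
      rintro e he f hf hne (h | h | ⟨h, hadj⟩)
      · exact hne (hlo e he f hf h)
      · exact hhilo e he f hf h
      · exact hadj (hhi e he f hf hne h)
    rcases hR with ⟨-, h⟩ | ⟨-, h⟩
    · exact key e he f hf hne h
    · exact key f hf e he hne.symm h

lemma card_le_of_isIndepFinset_sortedHatGraph [Fintype V] {S : Finset G.SortedEdge}
    (hS : (sortedHatGraph G).IsIndepFinset S) : #S ≤ Fintype.card V := by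
  rw [← card_image_of_injOn fun e he f hf => (isIndepFinset_sortedHatGraph_iff.1 hS).1 e he f hf]
  exact card_le_univ _

section CliqueCover

-- When `v` is not a lower end of an edge of `S`, `star S v` is the part with maximum `v`
-- of the clique cover encoded by `S`.
open Classical in
def star (S : Finset G.SortedEdge) (v : V) : Finset V :=
  insert v ({e ∈ S | e.hi = v}.image lo)

variable {S : Finset G.SortedEdge} {v w x : V}

lemma mem_star : x ∈ star S v ↔ x = v ∨ ∃ e ∈ S, e.hi = v ∧ e.lo = x := by
  classical
  simp only [star, mem_insert, mem_image, mem_filter, and_assoc]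

lemma self_mem_star : v ∈ star S v := mem_star.2 (Or.inl rfl)

lemma le_of_mem_star (h : x ∈ star S v) : x ≤ v := by
  obtain rfl | ⟨e, -, rfl, rfl⟩ := mem_star.1 h
  exacts [le_rfl, e.lo_lt_hi.le]

lemma eq_of_mem_star (hv : v ∉ S.image lo) (h : v ∈ star S w) : v = w := by
  obtain h | ⟨e, he, -, rfl⟩ := mem_star.1 h
  exacts [h, absurd (mem_image_of_mem lo he) hv]

variable (hS : (sortedHatGraph G).IsIndepFinset S)
include hS

lemma eq_of_mem_star_of_mem_star (hv : v ∉ S.image lo) (hw : w ∉ S.image lo)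
    (hxv : x ∈ star S v) (hxw : x ∈ star S w) : v = w := by
  obtain rfl | ⟨e, he, rfl, rfl⟩ := mem_star.1 hxv
  · exact eq_of_mem_star hv hxw
  obtain h | ⟨f, hf, rfl, hfe⟩ := mem_star.1 hxw
  · exact absurd (h ▸ mem_image_of_mem lo he) hw
  · rw [(isIndepFinset_sortedHatGraph_iff.1 hS).1 e he f hf hfe.symm]

lemma exists_mem_star (x : V) : ∃ v ∉ S.image lo, x ∈ star S v := by
  by_cases hx : x ∈ S.image lo
  · obtain ⟨e, he, rfl⟩ := mem_image.1 hx
    refine ⟨e.hi, fun h => ?_, mem_star.2 (Or.inr ⟨e, he, rfl, rfl⟩)⟩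
    obtain ⟨f, hf, hfe⟩ := mem_image.1 h
    exact (isIndepFinset_sortedHatGraph_iff.1 hS).2.1 e he f hf hfe.symm
  · exact ⟨x, hx, self_mem_star⟩

variable [Fintype V]

open Classical in
noncomputable def cliqueCoverOf : Finpartition (univ : Finset V) :=
  Finpartition.ofExistsUnique ((S.image lo)ᶜ.image (star S)) (fun _ _ => subset_univ _)
    (fun x _ => by
      obtain ⟨v, hv, hxv⟩ := exists_mem_star hS x
      refine ⟨star S v, ⟨mem_image_of_mem _ (mem_compl.2 hv), hxv⟩, ?_⟩
      rintro _ ⟨ht, hxw⟩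
      obtain ⟨w, hw, rfl⟩ := mem_image.1 ht
      rw [eq_of_mem_star_of_mem_star hS (mem_compl.1 hw) hv hxw hxv])
    (fun h => by
      obtain ⟨v, -, hv⟩ := mem_image.1 h
      exact notMem_empty v (hv ▸ self_mem_star))

lemma mem_parts_cliqueCoverOf {p : Finset V} :
    p ∈ (cliqueCoverOf hS).parts ↔ ∃ v ∉ S.image lo, star S v = p := by
  classical
  simp [cliqueCoverOf]

lemma part_cliqueCoverOf (hv : v ∉ S.image lo) (hx : x ∈ star S v) :
    (cliqueCoverOf hS).part x = star S v :=
  Finpartition.part_eq_of_mem _ ((mem_parts_cliqueCoverOf hS).2 ⟨v, hv, rfl⟩) hx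

lemma isCliqueCover_cliqueCoverOf : G.IsCliqueCover (cliqueCoverOf hS) := by
  rintro _ hp x hx y hy hxy
  obtain ⟨v, -, rfl⟩ := (mem_parts_cliqueCoverOf hS).1 hp
  obtain rfl | ⟨e, he, rfl, rfl⟩ := mem_star.1 hx <;>
    obtain h | ⟨f, hf, hfe, rfl⟩ := mem_star.1 hy
  · exact absurd h.symm hxy
  · exact (hfe ▸ f.adj).symm
  · exact h ▸ e.adj
  · have hef : e ≠ f := by rintro rfl; exact hxy rfl
    exact (isIndepFinset_sortedHatGraph_iff.1 hS).2.2 e he f hf hef hfe.symm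

lemma card_parts_cliqueCoverOf : #(cliqueCoverOf hS).parts = Fintype.card V - #S := by
  classical
  have hinj : Set.InjOn (star S) ((S.image lo)ᶜ : Finset V) := fun v hv w _ h =>
    eq_of_mem_star (mem_compl.1 hv) (h ▸ self_mem_star)
  have hlo : #(S.image lo) = #S :=
    card_image_of_injOn fun e he f hf => (isIndepFinset_sortedHatGraph_iff.1 hS).1 e he f hf
  simp only [cliqueCoverOf, Finpartition.ofExistsUnique_parts]
  rw [card_image_of_injOn hinj, card_compl, hlo]

end CliqueCover

section EdgesToMax

variable [Fintype V] {P : Finpartition (univ : Finset V)} {v x y : V}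

lemma IsCliqueCover.adj (hP : G.IsCliqueCover P) (hx : x ∈ P.part v) (hy : y ∈ P.part v)
    (hxy : x ≠ y) : G.Adj x y :=
  hP _ (P.part_mem.2 (mem_univ v)) hx hy hxy

variable (G) in
open Classical in
noncomputable def edgesToMax (P : Finpartition (univ : Finset V)) : Finset G.SortedEdge :=
  {e | e.hi ∈ P.part e.lo ∧ ∀ x ∈ P.part e.lo, x ≤ e.hi}

lemma mem_edgesToMax {e : G.SortedEdge} :
    e ∈ edgesToMax G P ↔ e.hi ∈ P.part e.lo ∧ ∀ x ∈ P.part e.lo, x ≤ e.hi := by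
  classical
  simp [edgesToMax]

variable (hP : G.IsCliqueCover P)
include hP

lemma isIndepFinset_edgesToMax : (sortedHatGraph G).IsIndepFinset (edgesToMax G P) := by
  refine isIndepFinset_sortedHatGraph_iff.2 ⟨fun e he f hf h => ?_, fun e he f hf h => ?_,
    fun e he f hf hef h => ?_⟩ <;> rw [mem_edgesToMax] at he hf
  · exact SortedEdge.ext h (le_antisymm (hf.2 _ (h ▸ he.1)) (he.2 _ (h ▸ hf.1)))
  · have hfe : P.part f.lo = P.part e.lo := h ▸ Finpartition.part_eq_part_of_mem_part he.1
    exact not_lt_of_ge (he.2 _ (hfe ▸ hf.1)) (h ▸ f.lo_lt_hi)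
  · have hpart : P.part f.lo = P.part e.lo := by
      rw [← Finpartition.part_eq_part_of_mem_part hf.1, ← h,
        Finpartition.part_eq_part_of_mem_part he.1]
    refine hP.adj (P.mem_part (mem_univ _)) (hpart ▸ P.mem_part (mem_univ _)) fun hlo => ?_
    exact hef (SortedEdge.ext hlo h)

lemma notMem_image_lo_edgesToMax_iff :
    v ∉ (edgesToMax G P).image lo ↔ ∀ z ∈ P.part v, z ≤ v := by
  constructor
  · intro hv z hz
    by_contra! hvz
    set m := (P.part v).max' ⟨z, hz⟩
    have hm : m ∈ P.part v := max'_mem _ _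
    have hvm : v < m := hvz.trans_le (le_max' _ z hz)
    have he : SortedEdge.mk hvm (hP.adj (P.mem_part (mem_univ v)) hm hvm.ne) ∈ edgesToMax G P :=
      mem_edgesToMax.2 ⟨hm, fun w hw => le_max' _ w hw⟩
    exact hv (mem_image_of_mem lo he)
  · rintro hv h
    obtain ⟨e, he, rfl⟩ := mem_image.1 h
    exact not_lt_of_ge (hv _ (mem_edgesToMax.1 he).1) e.lo_lt_hi

lemma star_edgesToMax (hv : ∀ z ∈ P.part v, z ≤ v) : star (edgesToMax G P) v = P.part v := by
  ext x
  rw [mem_star]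
  constructor
  · rintro (rfl | ⟨e, he, rfl, rfl⟩)
    · exact P.mem_part (mem_univ x)
    · rw [Finpartition.part_eq_part_of_mem_part (mem_edgesToMax.1 he).1]
      exact P.mem_part (mem_univ _)
  · intro hx
    obtain rfl | hxv := eq_or_ne x v
    · exact Or.inl rfl
    have hpart := Finpartition.part_eq_part_of_mem_part hx
    have hadj := hP.adj hx (P.mem_part (mem_univ v)) hxv
    refine Or.inr ⟨SortedEdge.mk ((hv x hx).lt_of_ne hxv) hadj, ?_, rfl, rfl⟩
    exact mem_edgesToMax.2 ⟨hpart ▸ P.mem_part (mem_univ v), fun z hz => hv z (hpart ▸ hz)⟩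

lemma cliqueCoverOf_edgesToMax : cliqueCoverOf (isIndepFinset_edgesToMax hP) = P := by
  ext p
  rw [mem_parts_cliqueCoverOf]
  constructor
  · rintro ⟨v, hv, rfl⟩
    rw [star_edgesToMax hP ((notMem_image_lo_edgesToMax_iff hP).1 hv)]
    exact P.part_mem.2 (mem_univ v)
  · intro hp
    have hne := P.nonempty_of_mem_parts hp
    have hmax : P.part (p.max' hne) = p := P.part_eq_of_mem hp (max'_mem p hne)
    have hle : ∀ z ∈ P.part (p.max' hne), z ≤ p.max' hne := fun z hz =>
      le_max' p z (hmax ▸ hz)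
    exact ⟨p.max' hne, (notMem_image_lo_edgesToMax_iff hP).2 hle,
      (star_edgesToMax hP hle).trans hmax⟩

end EdgesToMax

lemma edgesToMax_cliqueCoverOf [Fintype V] {S : Finset G.SortedEdge}
    (hS : (sortedHatGraph G).IsIndepFinset S) : edgesToMax G (cliqueCoverOf hS) = S := by
  have hroot : ∀ e ∈ S, e.hi ∉ S.image lo := fun e he h => by
    obtain ⟨f, hf, hfe⟩ := mem_image.1 h
    exact (isIndepFinset_sortedHatGraph_iff.1 hS).2.1 e he f hf hfe.symm
  ext e
  rw [mem_edgesToMax]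
  constructor
  · rintro ⟨hhi, hmax⟩
    obtain ⟨v, hv, hpart⟩ := (mem_parts_cliqueCoverOf hS).1
      ((cliqueCoverOf hS).part_mem.2 (mem_univ e.lo))
    rw [← hpart] at hhi hmax
    have hev : e.hi = v := le_antisymm (le_of_mem_star hhi) (hmax v self_mem_star)
    have hlo := hpart ▸ (cliqueCoverOf hS).mem_part (mem_univ e.lo)
    obtain h | ⟨f, hf, hfv, hfe⟩ := mem_star.1 hlo
    · exact absurd (h.trans hev.symm) e.lo_lt_hi.ne
    · rwa [SortedEdge.ext hfe (hfv.trans hev.symm)] at hf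
  · intro he
    have hlo : e.lo ∈ star S e.hi := mem_star.2 (Or.inr ⟨e, he, rfl, rfl⟩)
    rw [part_cliqueCoverOf hS (hroot e he) hlo]
    exact ⟨self_mem_star, fun x hx => le_of_mem_star hx⟩

section Counting

variable [Fintype V]

theorem numCliqueCovers_sub_eq_numIndepSets_sortedHatGraph {k : ℕ} (hk : k ≤ Fintype.card V) :
    numCliqueCovers G (Fintype.card V - k) = numIndepSets (sortedHatGraph G) k := by
  refine Set.ncard_congr (fun P _ => edgesToMax G P) ?_ ?_ ?_
  · rintro P ⟨hP, hcard⟩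
    refine ⟨isIndepFinset_edgesToMax hP, ?_⟩
    have h := card_parts_cliqueCoverOf (isIndepFinset_edgesToMax hP)
    rw [cliqueCoverOf_edgesToMax hP, hcard] at h
    have := card_le_of_isIndepFinset_sortedHatGraph (isIndepFinset_edgesToMax hP)
    omega
  · rintro P Q ⟨hP, -⟩ ⟨hQ, -⟩ h
    calc P = cliqueCoverOf (isIndepFinset_edgesToMax hP) := (cliqueCoverOf_edgesToMax hP).symm
      _ = cliqueCoverOf (isIndepFinset_edgesToMax hQ) := by congr 1
      _ = Q := cliqueCoverOf_edgesToMax hQ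
  · rintro S ⟨hS, rfl⟩
    exact ⟨cliqueCoverOf hS, ⟨isCliqueCover_cliqueCoverOf hS, card_parts_cliqueCoverOf hS⟩,
      edgesToMax_cliqueCoverOf hS⟩

theorem numMatchings_eq_numIndepSets_sortedLineGraph (k : ℕ) :
    numMatchings G k = numIndepSets (sortedLineGraph G) k := by
  classical
  refine (Set.ncard_congr (fun S _ => S.image toSym2) ?_ ?_ ?_).symm
  · rintro S ⟨hS, rfl⟩
    refine ⟨⟨fun x hx => ?_, ?_⟩, card_image_of_injective _ toSym2_injective⟩
    · obtain ⟨e, -, rfl⟩ := mem_image.1 hx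
      exact e.toSym2_mem_edgeSet
    · rintro _ hx _ hy hne v ⟨hve, hvf⟩
      obtain ⟨e, he, rfl⟩ := mem_image.1 hx
      obtain ⟨f, hf, rfl⟩ := mem_image.1 hy
      exact hS e he f hf ⟨fun h => hne (h ▸ rfl), v, hve, hvf⟩
  · exact fun S T _ _ h => image_injective toSym2_injective h
  · rintro s ⟨hs, rfl⟩
    obtain ⟨S, -, rfl⟩ := subset_image_iff.1 fun x hx => by
      obtain ⟨e, rfl⟩ := exists_toSym2_eq (hs.1 hx)
      exact mem_image_of_mem _ (mem_univ e)
    refine ⟨S, ⟨fun e he f hf ⟨hne, v, hve, hvf⟩ => ?_,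
      (card_image_of_injective _ toSym2_injective).symm⟩, rfl⟩
    exact hs.2 _ (mem_image_of_mem _ he) _ (mem_image_of_mem _ hf) (toSym2_injective.ne hne) v
      ⟨hve, hvf⟩

end Counting

section Polynomials

variable [Fintype V] (G)

lemma eval_matchPoly {x : ℝ} (hx : x ≠ 0) :
    (matchPoly G).eval x = x ^ Fintype.card V * (sortedLineGraph G).indepSum univ x⁻¹ := by
  rw [← sum_numIndepSets_mul_pow_sub (fun s hs => card_le_of_isIndepFinset_sortedHatGraph
    (hs.anti sortedHatGraph_le_sortedLineGraph)) hx]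
  simp [matchPoly, eval_finsetSum, numMatchings_eq_numIndepSets_sortedLineGraph]

lemma eval_adjPoly {x : ℝ} (hx : x ≠ 0) :
    (adjPoly G).eval x = x ^ Fintype.card V * (sortedHatGraph G).indepSum univ x⁻¹ := by
  rw [← sum_numIndepSets_mul_pow_sub (fun s hs => card_le_of_isIndepFinset_sortedHatGraph hs) hx,
    adjPoly, eval_finsetSum, ← sum_range_reflect]
  refine sum_congr rfl fun k hk => ?_
  have hk' : k ≤ Fintype.card V := Nat.le_of_lt_succ (mem_range.1 hk)
  simp [numCliqueCovers_sub_eq_numIndepSets_sortedHatGraph hk', Nat.sub_sub_self hk']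

end Polynomials

end SortedEdges

end SimpleGraph

theorem stmt15_general {V : Type*} [Fintype V] [DecidableEq V] (G : SimpleGraph V)
    (he : ∃ a b, G.Adj a b) (g t : ℝ)
    (hg : IsGammaZero (adjPoly G) g) (ht : IsGammaZero (matchPoly G) t) :
    g ≤ t := by
  let : LinearOrder V := LinearOrder.lift' (Fintype.equivFin V) (Fintype.equivFin V).injective
  obtain ⟨a, b, hab⟩ := he
  obtain ⟨e, -⟩ := SimpleGraph.SortedEdge.exists_toSym2_eq (G.mem_edgeSet.2 hab)
  have : Nonempty G.SortedEdge := ⟨e⟩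
  refine SimpleGraph.isGammaZero_le_of_le SimpleGraph.sortedHatGraph_le_sortedLineGraph
    (fun x hx => ?_) (fun x hx => G.eval_matchPoly hx.ne') hg ht
  -- `hg` uses the given `DecidableEq V`, `eval_adjPoly` the one coming from the order.
  convert G.eval_adjPoly hx.ne'

/-- for connected `G` with at least one edge, `γ(G) ≤ t(G)`, where `t(G)`
is the largest real zero of the matching polynomial. -/
theorem stmt15 {V : Type*} [Fintype V] [DecidableEq V] (G : SimpleGraph V)
    (hc : G.Connected) (he : ∃ a b, G.Adj a b) (g t : ℝ)
    (hg : IsGammaZero (adjPoly G) g) (ht : IsGammaZero (matchPoly G) t) :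
    g ≤ t :=
  stmt15_general G he g t hg ht
end
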